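/- Let Z be a zig-zag snake graph with tiles G_1, ..., G_n (i.e., no three consecutive tiles form a straight piece), equipped with the sign function in which every interior (glued) edge e_i between G_i and G_{i+1} has sign '−'. Let x be the unique edge of G_1 among {W(G_1), S(G_1)} with sign '+', and let y be the unique edge of G_n among {N(G_n), E(G_n)} with sign '+'. Then every perfect matching of Z contains x or y. -/
import Mathlib


namespace SnakeGraph

/-- A vertex of the square lattice. -/
abbrev Vertex : Type := ℤ × ℤ

/-- An edge of the square lattice: a base vertex together with `true` for a
horizontal edge (from `v` to `v + (1,0)`) or `false` for a vertical edge
(from `v` to `v + (0,1)`). -/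
abbrev Edge : Type := Vertex × Bool

/-- The two endpoints of an edge. -/
def endpoints (e : Edge) : Finset Vertex :=
  {e.1, if e.2 then (e.1.1 + 1, e.1.2) else (e.1.1, e.1.2 + 1)}

/-- The gluing direction between two consecutive tiles of a snake graph:
the north or the east edge of a tile is glued to the south, resp. west,
edge of the next tile. -/
inductive Dir : Type
  | east : Dir
  | north : Dir
deriving DecidableEq

def stepDir : Dir → Vertex
  | .east => (1, 0)
  | .north => (0, 1)

/-- The position (south-west corner) of the `i`-th tile (tiles are 0-indexed),
for the snake graph with gluing directions `d 0, d 1, ...`. -/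
def tilePos (d : ℕ → Dir) : ℕ → Vertex
  | 0 => (0, 0)
  | i + 1 => tilePos d i + stepDir (d i)

/-- South edge of the tile with south-west corner `p`. -/
def S (p : Vertex) : Edge := (p, true)

/-- North edge of the tile with south-west corner `p`. -/
def N (p : Vertex) : Edge := ((p.1, p.2 + 1), true)

/-- West edge of the tile with south-west corner `p`. -/
def W (p : Vertex) : Edge := (p, false)

/-- East edge of the tile with south-west corner `p`. -/
def E (p : Vertex) : Edge := ((p.1 + 1, p.2), false)

/-- The four edges of the tile with south-west corner `p`. -/
def tileEdges (p : Vertex) : Finset Edge := {S p, N p, W p, E p}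

/-- The four vertices of the tile with south-west corner `p`. -/
def tileVertices (p : Vertex) : Finset Vertex :=
  {p, (p.1 + 1, p.2), (p.1, p.2 + 1), (p.1 + 1, p.2 + 1)}

/-- The edge set of the sub snake graph consisting of tiles `lo, ..., n-1`. -/
def edgesFrom (d : ℕ → Dir) (lo n : ℕ) : Finset Edge :=
  (Finset.Ico lo n).biUnion fun i => tileEdges (tilePos d i)

/-- The vertex set of the sub snake graph consisting of tiles `lo, ..., n-1`. -/
def verticesFrom (d : ℕ → Dir) (lo n : ℕ) : Finset Vertex :=
  (Finset.Ico lo n).biUnion fun i => tileVertices (tilePos d i)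

/-- The edge set of the snake graph with `n` tiles and gluing directions `d`. -/
def edges (d : ℕ → Dir) (n : ℕ) : Finset Edge := edgesFrom d 0 n

/-- The vertex set of the snake graph with `n` tiles and gluing directions `d`. -/
def vertices (d : ℕ → Dir) (n : ℕ) : Finset Vertex := verticesFrom d 0 n

/-- The interior (glued) edge `e_i` shared by tiles `i` and `i+1`. -/
def glueEdge (d : ℕ → Dir) (i : ℕ) : Edge :=
  match d i with
  | .east => E (tilePos d i)
  | .north => N (tilePos d i)

/-- `M` is a perfect matching of the graph with vertex set `Vs` and edge set
`Es`: a set of edges covering every vertex exactly once. -/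
def IsPM (Vs : Finset Vertex) (Es : Finset Edge) (M : Finset Edge) : Prop :=
  M ⊆ Es ∧ ∀ v ∈ Vs, (M.filter fun e => v ∈ endpoints e).card = 1

/-- `M` is a perfect matching of the snake graph with `n` tiles and gluing
directions `d`. -/
def IsPerfectMatching (d : ℕ → Dir) (n : ℕ) (M : Finset Edge) : Prop :=
  IsPM (vertices d n) (edges d n) M

/-- A sign function on the snake graph with `n` tiles: on every tile,
`sgn N = sgn W`, `sgn S = sgn E`, and `sgn N ≠ sgn S`
(`true` stands for `+`, `false` for `−`). -/
def IsSignFunction (d : ℕ → Dir) (n : ℕ) (f : Edge → Bool) : Prop :=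
  ∀ i < n,
    f (N (tilePos d i)) = f (W (tilePos d i)) ∧
    f (S (tilePos d i)) = f (E (tilePos d i)) ∧
    f (N (tilePos d i)) ≠ f (S (tilePos d i))

/-- A snake graph is zig-zag if no three consecutive tiles are glued in the
same direction. -/
def IsZigZag (d : ℕ → Dir) (n : ℕ) : Prop :=
  ∀ i, i + 2 < n → d i ≠ d (i + 1)

/-- A snake graph is straight if all gluings are in the same direction. -/
def IsStraight (d : ℕ → Dir) (n : ℕ) : Prop :=
  ∀ i j, i + 1 < n → j + 1 < n → d i = d j


lemma pm_unique {M : Finset Edge} {P : Edge → Prop} [DecidablePred P]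
    (h : (M.filter P).card = 1) {e1 e2 : Edge} (h1 : e1 ∈ M) (hp1 : P e1)
    (h2 : e2 ∈ M) (hp2 : P e2) : e1 = e2 :=
  Finset.card_le_one.mp h.le e1 (Finset.mem_filter.mpr ⟨h1, hp1⟩)
    e2 (Finset.mem_filter.mpr ⟨h2, hp2⟩)

lemma pm_exists {M : Finset Edge} {P : Edge → Prop} [DecidablePred P]
    (h : (M.filter P).card = 1) : ∃ e ∈ M, P e := by
  obtain ⟨e, he⟩ := Finset.card_pos.mp (h ▸ Nat.one_pos)
  exact ⟨e, (Finset.mem_filter.mp he).1, (Finset.mem_filter.mp he).2⟩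

lemma mem_edges {d : ℕ → Dir} {n i : ℕ} (hi : i < n) {e : Edge}
    (he : e ∈ tileEdges (tilePos d i)) : e ∈ edges d n := by
  simp only [edges, edgesFrom, Finset.mem_biUnion, Finset.mem_Ico]
  exact ⟨i, ⟨Nat.zero_le _, hi⟩, he⟩

lemma mem_vertices {d : ℕ → Dir} {n i : ℕ} (hi : i < n) {v : Vertex}
    (hv : v ∈ tileVertices (tilePos d i)) : v ∈ vertices d n := by
  simp only [vertices, verticesFrom, Finset.mem_biUnion, Finset.mem_Ico]
  exact ⟨i, ⟨Nat.zero_le _, hi⟩, hv⟩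

lemma hpos_lemma {d : ℕ → Dir} {n : ℕ}
    (hd : ∀ i, i + 1 < n → d i = if i % 2 = 0 then Dir.east else Dir.north) :
    ∀ i < n, tilePos d i = ((((i+1)/2 : ℕ) : ℤ), ((i/2 : ℕ) : ℤ)) := by
  intro i
  induction i with
  | zero => intro _; simp [tilePos]
  | succ i ih =>
    intro hi
    have hii : i < n := by omega
    rw [tilePos, ih hii, hd i hi]
    by_cases h : i % 2 = 0 <;>
      simp only [h, if_true, if_false, stepDir, Prod.mk_add_mk, Prod.mk.injEq] <;>
      constructor <;> push_cast <;> omega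
lemma inc_gen {d : ℕ → Dir} {n : ℕ}
    (hp : ∀ i < n, tilePos d i = ((((i+1)/2 : ℕ) : ℤ), ((i/2 : ℕ) : ℤ)))
    {v : Vertex} {a b : Edge}
    (h : ∀ i < n, ∀ e ∈ tileEdges ((((i+1)/2 : ℕ) : ℤ), ((i/2 : ℕ) : ℤ)),
        v ∈ endpoints e → e = a ∨ e = b) :
    ∀ e ∈ edges d n, v ∈ endpoints e → e = a ∨ e = b := by
  intro e he hv
  simp only [edges, edgesFrom, Finset.mem_biUnion, Finset.mem_Ico] at he
  obtain ⟨i, ⟨-, hi⟩, he⟩ := he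
  rw [hp i hi] at he
  exact h i hi e he hv

lemma incA {d : ℕ → Dir} {n : ℕ}
    (hp : ∀ i < n, tilePos d i = ((((i+1)/2 : ℕ) : ℤ), ((i/2 : ℕ) : ℤ))) :
    ∀ e ∈ edges d n, ((0:ℤ),(0:ℤ)) ∈ endpoints e →
      e = W ((0:ℤ),(0:ℤ)) ∨ e = S ((0:ℤ),(0:ℤ)) := by
  refine inc_gen hp ?_
  intro i hi e he hv
  simp only [tileEdges, Finset.mem_insert, Finset.mem_singleton] at he
  rcases he with rfl | rfl | rfl | rfl <;>
    simp only [S, N, W, E, endpoints, Finset.mem_insert, Finset.mem_singleton,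
      Prod.mk.injEq, if_true, if_false, Bool.true_eq_false, Bool.false_eq_true,
      and_true, and_false, true_and, false_and, or_false, false_or] at hv ⊢ <;>
    omega

lemma incB {d : ℕ → Dir} {n : ℕ}
    (hp : ∀ i < n, tilePos d i = ((((i+1)/2 : ℕ) : ℤ), ((i/2 : ℕ) : ℤ))) (k : ℕ) :
    ∀ e ∈ edges d n, (((k:ℤ)+2), (k:ℤ)) ∈ endpoints e →
      e = S (((k:ℤ)+1), (k:ℤ)) ∨ e = E (((k:ℤ)+1), (k:ℤ)) := by
  refine inc_gen hp ?_
  intro i hi e he hv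
  simp only [tileEdges, Finset.mem_insert, Finset.mem_singleton] at he
  rcases he with rfl | rfl | rfl | rfl <;>
    simp only [S, N, W, E, endpoints, Finset.mem_insert, Finset.mem_singleton,
      Prod.mk.injEq, if_true, if_false, Bool.true_eq_false, Bool.false_eq_true,
      and_true, and_false, true_and, false_and, or_false, false_or] at hv ⊢ <;>
    omega

lemma incC {d : ℕ → Dir} {n : ℕ}
    (hp : ∀ i < n, tilePos d i = ((((i+1)/2 : ℕ) : ℤ), ((i/2 : ℕ) : ℤ))) (k : ℕ) :
    ∀ e ∈ edges d n, (((k:ℤ)+3), ((k:ℤ)+1)) ∈ endpoints e →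
      e = S (((k:ℤ)+2), ((k:ℤ)+1)) ∨ e = E (((k:ℤ)+2), ((k:ℤ)+1)) := by
  refine inc_gen hp ?_
  intro i hi e he hv
  simp only [tileEdges, Finset.mem_insert, Finset.mem_singleton] at he
  rcases he with rfl | rfl | rfl | rfl <;>
    simp only [S, N, W, E, endpoints, Finset.mem_insert, Finset.mem_singleton,
      Prod.mk.injEq, if_true, if_false, Bool.true_eq_false, Bool.false_eq_true,
      and_true, and_false, true_and, false_and, or_false, false_or] at hv ⊢ <;>
    omega

lemma incD {d : ℕ → Dir} {n : ℕ}
    (hp : ∀ i < n, tilePos d i = ((((i+1)/2 : ℕ) : ℤ), ((i/2 : ℕ) : ℤ)))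
    (m : ℕ) (hnm : n = 2*m+1) :
    ∀ e ∈ edges d n, (((m:ℤ)+1), ((m:ℤ)+1)) ∈ endpoints e →
      e = N (((m:ℤ)), ((m:ℤ))) ∨ e = E (((m:ℤ)), ((m:ℤ))) := by
  refine inc_gen hp ?_
  intro i hi e he hv
  simp only [tileEdges, Finset.mem_insert, Finset.mem_singleton] at he
  rcases he with rfl | rfl | rfl | rfl <;>
    simp only [S, N, W, E, endpoints, Finset.mem_insert, Finset.mem_singleton,
      Prod.mk.injEq, if_true, if_false, Bool.true_eq_false, Bool.false_eq_true,
      and_true, and_false, true_and, false_and, or_false, false_or] at hv ⊢ <;>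
    omega
lemma LR (d : ℕ → Dir) (n : ℕ) (hn : 2 ≤ n)
    (hd : ∀ i, i + 1 < n → d i = if i % 2 = 0 then Dir.east else Dir.north)
    (M : Finset Edge) (hM : IsPerfectMatching d n M)
    (hxM : W ((0:ℤ),(0:ℤ)) ∉ M) :
    (if n % 2 = 0 then E (tilePos d (n-1)) else N (tilePos d (n-1))) ∈ M := by
  obtain ⟨hMsub, hdeg⟩ := hM
  have hp := hpos_lemma hd
  have getE : ∀ v ∈ vertices d n, ∃ e ∈ M, v ∈ endpoints e :=
    fun v hv => pm_exists (hdeg v hv)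
  have uniq : ∀ v ∈ vertices d n, ∀ e1 ∈ M, ∀ e2 ∈ M,
      v ∈ endpoints e1 → v ∈ endpoints e2 → e1 = e2 :=
    fun v hv e1 h1 e2 h2 hv1 hv2 => pm_unique (hdeg v hv) h1 hv1 h2 hv2
  have vmem : ∀ i, i < n → ∀ v : Vertex,
      v ∈ tileVertices ((((i+1)/2 : ℕ) : ℤ), ((i/2 : ℕ) : ℤ)) → v ∈ vertices d n := by
    intro i hi v hv
    refine mem_vertices hi ?_
    rw [hp i hi]; exact hv
  -- propagation
  have C : ∀ k : ℕ, 2*k+1 < n → E (((k:ℤ)+1), (k:ℤ)) ∈ M := by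
    intro k
    induction k with
    | zero =>
      intro hk
      have h00 : ((0:ℤ),(0:ℤ)) ∈ vertices d n := by
        refine vmem 0 (by omega) _ ?_
        simp [tileVertices]
      obtain ⟨e, heM, hve⟩ := getE _ h00
      have hS0 : S ((0:ℤ),(0:ℤ)) ∈ M := by
        rcases incA hp e (hMsub heM) hve with rfl | rfl
        · exact absurd heM hxM
        · exact heM
      have h10 : ((1:ℤ),(0:ℤ)) ∈ vertices d n := by
        refine vmem 0 (by omega) _ ?_
        simp only [tileVertices, Finset.mem_insert, Finset.mem_singleton, Prod.mk.injEq]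
        norm_num
      have hS1 : S ((1:ℤ),(0:ℤ)) ∉ M := by
        intro hmem
        have h := uniq _ h10 _ hS0 _ hmem
          (by simp [S, endpoints]) (by simp [S, endpoints])
        simp only [S, Prod.mk.injEq] at h
        omega
      have h20 : ((2:ℤ),(0:ℤ)) ∈ vertices d n := by
        refine vmem 1 (by omega) _ ?_
        simp only [tileVertices, Finset.mem_insert, Finset.mem_singleton, Prod.mk.injEq]
        norm_num
      obtain ⟨e, heM, hve⟩ := getE _ h20
      have h2 := incB hp 0 e (hMsub heM) (by norm_num at hve ⊢; exact hve)
      norm_num at h2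
      rcases h2 with rfl | rfl
      · exact absurd heM (by norm_num at hS1 ⊢; exact hS1)
      · norm_num
        exact heM
    | succ k ih =>
      intro hk
      have prev : E (((k:ℤ)+1), (k:ℤ)) ∈ M := ih (by omega)
      have hv1 : (((k:ℤ)+2),((k:ℤ)+1)) ∈ vertices d n := by
        refine vmem (2*k+3) (by omega) _ ?_
        simp only [tileVertices, Finset.mem_insert, Finset.mem_singleton, Prod.mk.injEq]
        omega
      have hSnot : S ((((k:ℤ)+2)),((k:ℤ)+1)) ∉ M := by
        intro hmem
        have h := uniq _ hv1 _ prev _ hmem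
          (by simp only [S, N, W, E, endpoints, Finset.mem_insert, Finset.mem_singleton,
                Prod.mk.injEq, if_true, if_false, Bool.true_eq_false, Bool.false_eq_true,
                and_true, and_false, true_and, false_and, or_false, false_or, eq_self_iff_true, true_or, or_true] <;> omega)
          (by simp [S, endpoints])
        simp only [S, E, Prod.mk.injEq, Bool.false_eq_true, and_false] at h
      have hv2 : (((k:ℤ)+3),((k:ℤ)+1)) ∈ vertices d n := by
        refine vmem (2*k+3) (by omega) _ ?_
        simp only [tileVertices, Finset.mem_insert, Finset.mem_singleton, Prod.mk.injEq]
        omega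
      obtain ⟨e, heM, hve⟩ := getE _ hv2
      have h2 := incC hp k e (hMsub heM) hve
      have goaleq : E (((k:ℤ)+2), ((k:ℤ)+1)) = E ((((k+1) : ℕ):ℤ)+1, (((k+1) : ℕ):ℤ)) := by
        simp only [E, Prod.mk.injEq, eq_self_iff_true, and_true, true_and]; push_cast; omega
      rcases h2 with rfl | rfl
      · exact absurd heM hSnot
      · rw [← goaleq]; exact heM
  -- endgame
  rcases Nat.even_or_odd n with he | ho
  · obtain ⟨m, hm⟩ : ∃ m, n = 2*m+2 := by
      rcases he with ⟨t, ht⟩; exact ⟨t-1, by omega⟩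
    have hE := C m (by omega)
    have : (if n % 2 = 0 then E (tilePos d (n-1)) else N (tilePos d (n-1)))
        = E (((m:ℤ)+1), (m:ℤ)) := by
      rw [if_pos (by omega), hp (n-1) (by omega)]
      simp only [E, Prod.mk.injEq, eq_self_iff_true, and_true, true_and]
      omega
    rw [this]; exact hE
  · obtain ⟨m, hm⟩ : ∃ m, n = 2*m+1 := by
      rcases ho with ⟨t, ht⟩; exact ⟨t, by omega⟩
    have hm1 : 1 ≤ m := by omega
    have hE : E (((m:ℤ)), ((m:ℤ)-1)) ∈ M := by
      have := C (m-1) (by omega)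
      have heq : E ((((m-1:ℕ)):ℤ)+1, (((m-1:ℕ)):ℤ)) = E (((m:ℤ)), ((m:ℤ)-1)) := by
        simp only [E, Prod.mk.injEq, eq_self_iff_true, and_true, true_and]
        omega
      rw [heq] at this; exact this
    -- vertex (m+1, m) is covered by hE; exclude E (m, m)
    have hvm : (((m:ℤ)+1),((m:ℤ))) ∈ vertices d n := by
      refine vmem (2*m) (by omega) _ ?_
      simp only [tileVertices, Finset.mem_insert, Finset.mem_singleton, Prod.mk.injEq]
      omega
    have hEnot : E (((m:ℤ)), ((m:ℤ))) ∉ M := by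
      intro hmem
      have h := uniq _ hvm _ hE _ hmem
        (by simp only [S, N, W, E, endpoints, Finset.mem_insert, Finset.mem_singleton,
              Prod.mk.injEq, if_true, if_false, Bool.true_eq_false, Bool.false_eq_true,
              and_true, and_false, true_and, false_and, or_false, false_or, eq_self_iff_true, true_or, or_true] <;> omega)
        (by simp only [S, N, W, E, endpoints, Finset.mem_insert, Finset.mem_singleton,
              Prod.mk.injEq, if_true, if_false, Bool.true_eq_false, Bool.false_eq_true,
              and_true, and_false, true_and, false_and, or_false, false_or, eq_self_iff_true, true_or, or_true] <;> omega)
      simp only [E, Prod.mk.injEq, eq_self_iff_true, and_true, true_and] at h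
      omega
    -- vertex (m+1, m+1) forces N (m, m)
    have hvN : (((m:ℤ)+1),((m:ℤ)+1)) ∈ vertices d n := by
      refine vmem (2*m) (by omega) _ ?_
      simp only [tileVertices, Finset.mem_insert, Finset.mem_singleton, Prod.mk.injEq]
      omega
    obtain ⟨e, heM, hve⟩ := getE _ hvN
    have h2 := incD hp m hm e (hMsub heM) hve
    have hgoal : (if n % 2 = 0 then E (tilePos d (n-1)) else N (tilePos d (n-1)))
        = N (((m:ℤ)), ((m:ℤ))) := by
      rw [if_neg (by omega), hp (n-1) (by omega)]
      simp only [N, Prod.mk.injEq, eq_self_iff_true, and_true, true_and]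
      omega
    rcases h2 with rfl | rfl
    · rw [hgoal]; exact heM
    · exact absurd heM hEnot
def swV (v : Vertex) : Vertex := (v.2, v.1)

def sw (e : Edge) : Edge := (swV e.1, !e.2)

def swD : Dir → Dir
  | .east => .north
  | .north => .east

lemma swV_invol (v : Vertex) : swV (swV v) = v := rfl

lemma sw_invol (e : Edge) : sw (sw e) = e := by
  rcases e with ⟨⟨a, b⟩, h⟩; simp [sw, swV]

lemma sw_inj : Function.Injective sw := by
  intro a b h
  rw [← sw_invol a, h, sw_invol]

lemma mem_endpoints_sw {v : Vertex} {e : Edge} :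
    v ∈ endpoints (sw e) ↔ swV v ∈ endpoints e := by
  rcases e with ⟨⟨a, b⟩, h⟩; rcases v with ⟨x, y⟩
  cases h <;>
    simp [endpoints, sw, swV, Prod.ext_iff] <;> tauto

lemma tilePos_sw (d : ℕ → Dir) (i : ℕ) :
    tilePos (fun j => swD (d j)) i = swV (tilePos d i) := by
  induction i with
  | zero => rfl
  | succ i ih =>
    rw [tilePos, tilePos, ih]
    rcases h : d i with _ | _ <;> simp [h, swD, stepDir, swV, Prod.ext_iff, Prod.add_def]

lemma mem_tileEdges_sw {p : Vertex} {e : Edge} :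
    e ∈ tileEdges (swV p) ↔ sw e ∈ tileEdges p := by
  rcases p with ⟨a, b⟩; rcases e with ⟨⟨x, y⟩, h⟩
  cases h <;>
    simp [tileEdges, S, N, W, E, sw, swV, Prod.ext_iff] <;> tauto

lemma mem_edges_sw {d : ℕ → Dir} {n : ℕ} {e : Edge} :
    e ∈ edges (fun j => swD (d j)) n ↔ sw e ∈ edges d n := by
  simp only [edges, edgesFrom, Finset.mem_biUnion, Finset.mem_Ico]
  constructor <;> rintro ⟨i, hi, he⟩ <;> refine ⟨i, hi, ?_⟩
  · rw [tilePos_sw] at he; exact mem_tileEdges_sw.mp he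
  · rw [tilePos_sw]; exact mem_tileEdges_sw.mpr he

lemma mem_tileVertices_sw {p v : Vertex} :
    v ∈ tileVertices (swV p) ↔ swV v ∈ tileVertices p := by
  rcases p with ⟨a, b⟩; rcases v with ⟨x, y⟩
  simp [tileVertices, swV, Prod.ext_iff] <;> tauto

lemma mem_vertices_sw {d : ℕ → Dir} {n : ℕ} {v : Vertex} :
    v ∈ vertices (fun j => swD (d j)) n ↔ swV v ∈ vertices d n := by
  simp only [vertices, verticesFrom, Finset.mem_biUnion, Finset.mem_Ico]
  constructor <;> rintro ⟨i, hi, he⟩ <;> refine ⟨i, hi, ?_⟩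
  · rw [tilePos_sw] at he; exact mem_tileVertices_sw.mp he
  · rw [tilePos_sw]; exact mem_tileVertices_sw.mpr he

lemma isPM_sw {d : ℕ → Dir} {n : ℕ} {M : Finset Edge}
    (hM : IsPerfectMatching d n M) :
    IsPerfectMatching (fun j => swD (d j)) n (M.image sw) := by
  obtain ⟨hsub, hdeg⟩ := hM
  constructor
  · intro e he
    obtain ⟨a, ha, rfl⟩ := Finset.mem_image.mp he
    rw [mem_edges_sw, sw_invol]
    exact hsub ha
  · intro v hv
    have hfil : (M.image sw).filter (fun e => v ∈ endpoints e)
        = (M.filter fun e => swV v ∈ endpoints e).image sw := by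
      ext e
      simp only [Finset.mem_filter, Finset.mem_image]
      constructor
      · rintro ⟨⟨a, ha, rfl⟩, hve⟩
        exact ⟨a, ⟨ha, mem_endpoints_sw.mp hve⟩, rfl⟩
      · rintro ⟨a, ⟨ha, hva⟩, rfl⟩
        exact ⟨⟨a, ha, rfl⟩, mem_endpoints_sw.mpr hva⟩
    rw [hfil, Finset.card_image_of_injective _ sw_inj]
    exact hdeg _ (mem_vertices_sw.mp hv)

lemma dir_ne {u v : Dir} (h : u ≠ v) : v = swD u := by
  cases u <;> cases v <;> simp_all [swD]

lemma alt_lemma {d : ℕ → Dir} {n : ℕ} (hzz : IsZigZag d n) {a : Dir}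
    (h0 : d 0 = a) :
    ∀ i, i + 1 < n → d i = if i % 2 = 0 then a else swD a := by
  intro i
  induction i with
  | zero => intro _; simpa using h0
  | succ i ih =>
    intro hi
    have h1 := ih (by omega)
    have h2 : d (i+1) = swD (d i) := dir_ne (hzz i (by omega))
    rw [h2, h1]
    obtain ⟨t, rfl | rfl⟩ : ∃ t, i = 2*t ∨ i = 2*t+1 := ⟨i/2, by omega⟩
    · rw [if_pos (by omega), if_neg (by omega)]
    · rw [if_neg (by omega), if_pos (by omega)]
      cases a <;> rfl
lemma swD_inj : Function.Injective swD := by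
  intro a b h; cases a <;> cases b <;> simp_all [swD]

lemma E_swV (p : Vertex) : E (swV p) = sw (N p) := by
  rcases p with ⟨a, b⟩; simp [E, N, sw, swV]

lemma N_swV (p : Vertex) : N (swV p) = sw (E p) := by
  rcases p with ⟨a, b⟩; simp [E, N, sw, swV]

lemma sw_mem_image {M : Finset Edge} {a : Edge} :
    sw a ∈ M.image sw ↔ a ∈ M := by
  constructor
  · intro h
    obtain ⟨b, hb, hba⟩ := Finset.mem_image.mp h
    rwa [← sw_inj hba]
  · exact fun h => Finset.mem_image_of_mem _ h

end SnakeGraph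

open SnakeGraph in
/-- **Zig-zag lemma.** In a zig-zag snake graph with the sign function in
which every interior (glued) edge has sign `−`, every perfect matching
contains the unique `+`-edge `x ∈ {W(G₁), S(G₁)}` or the unique `+`-edge
`y ∈ {N(Gₙ), E(Gₙ)}`. -/
theorem zigzag_lemma (d : ℕ → Dir) (n : ℕ) (hn : 1 ≤ n)
    (hzz : IsZigZag d n)
    (f : Edge → Bool) (hf : IsSignFunction d n f)
    (hglue : ∀ i, i + 1 < n → f (glueEdge d i) = false)
    (x y : Edge)
    (hx : x = W ((0 : ℤ), (0 : ℤ)) ∨ x = S ((0 : ℤ), (0 : ℤ)))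
    (hfx : f x = true)
    (hy : y = N (tilePos d (n - 1)) ∨ y = E (tilePos d (n - 1)))
    (hfy : f y = true)
    (M : Finset Edge) (hM : IsPerfectMatching d n M) :
    x ∈ M ∨ y ∈ M := by
  have ht0 : tilePos d 0 = ((0 : ℤ), (0 : ℤ)) := rfl
  obtain ⟨hNW0, hSE0, hNS0⟩ := hf 0 (by omega)
  rw [ht0] at hNW0 hSE0 hNS0
  rcases Nat.lt_or_ge n 2 with h1 | h2
  · -- n = 1
    have hn1 : n = 1 := by omega
    subst hn1
    rw [ht0] at hy
    obtain ⟨hsub, hdeg⟩ := hM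
    cases hs : f (S ((0 : ℤ), (0 : ℤ)))
    · -- f S = false: x = W, y = N ; vertex (0,1) forces W or N
      have hxW : x = W ((0 : ℤ), (0 : ℤ)) := by
        rcases hx with rfl | rfl
        · rfl
        · rw [hfx] at hs; exact absurd hs (by simp)
      have hyN : y = N ((0 : ℤ), (0 : ℤ)) := by
        rcases hy with rfl | rfl
        · rfl
        · exfalso; rw [← hSE0] at hfy; rw [hfy] at hs; simp at hs
      have hv : ((0 : ℤ), (1 : ℤ)) ∈ vertices d 1 := by
        refine mem_vertices (i := 0) (by omega) ?_
        rw [ht0]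
        simp only [tileVertices, Finset.mem_insert, Finset.mem_singleton, Prod.mk.injEq]
        norm_num
      obtain ⟨e, heM, hve⟩ := pm_exists (hdeg _ hv)
      have he : e ∈ tileEdges ((0 : ℤ), (0 : ℤ)) := by
        have := hsub heM
        simp only [edges, edgesFrom, Finset.mem_biUnion, Finset.mem_Ico] at this
        obtain ⟨i, hi, hei⟩ := this
        have : i = 0 := by omega
        subst this
        rwa [ht0] at hei
      simp only [tileEdges, Finset.mem_insert, Finset.mem_singleton] at he
      rcases he with rfl | rfl | rfl | rfl <;>
        simp only [S, N, W, E, endpoints, Finset.mem_insert, Finset.mem_singleton,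
          Prod.mk.injEq, if_true, if_false, Bool.true_eq_false, Bool.false_eq_true,
          and_true, and_false, true_and, false_and, or_false, false_or] at hve <;>
        first
        | omega
        | (right; rw [hyN]; exact heM)
        | (left; rw [hxW]; exact heM)
    · -- f S = true: x = S, y = E ; vertex (1,0) forces S or E
      have hxS : x = S ((0 : ℤ), (0 : ℤ)) := by
        rcases hx with rfl | rfl
        · exfalso; rw [← hNW0] at hfx; simp_all
        · rfl
      have hyE : y = E ((0 : ℤ), (0 : ℤ)) := by
        rcases hy with rfl | rfl
        · exfalso; simp_all
        · rfl
      have hv : ((1 : ℤ), (0 : ℤ)) ∈ vertices d 1 := by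
        refine mem_vertices (i := 0) (by omega) ?_
        rw [ht0]
        simp only [tileVertices, Finset.mem_insert, Finset.mem_singleton, Prod.mk.injEq]
        norm_num
      obtain ⟨e, heM, hve⟩ := pm_exists (hdeg _ hv)
      have he : e ∈ tileEdges ((0 : ℤ), (0 : ℤ)) := by
        have := hsub heM
        simp only [edges, edgesFrom, Finset.mem_biUnion, Finset.mem_Ico] at this
        obtain ⟨i, hi, hei⟩ := this
        have : i = 0 := by omega
        subst this
        rwa [ht0] at hei
      simp only [tileEdges, Finset.mem_insert, Finset.mem_singleton] at he
      rcases he with rfl | rfl | rfl | rfl <;>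
        simp only [S, N, W, E, endpoints, Finset.mem_insert, Finset.mem_singleton,
          Prod.mk.injEq, if_true, if_false, Bool.true_eq_false, Bool.false_eq_true,
          and_true, and_false, true_and, false_and, or_false, false_or] at hve <;>
        first
        | omega
        | (left; rw [hxS]; exact heM)
        | (right; rw [hyE]; exact heM)
  · -- n ≥ 2
    have hglue0 := hglue 0 (by omega)
    have hglueN := hglue (n-2) (by omega)
    obtain ⟨hNWl, hSEl, hNSl⟩ := hf (n-1) (by omega)
    have hstep : n - 1 = (n-2) + 1 := by omega
    cases h0 : d 0 with
    | east =>
      have hgE : glueEdge d 0 = E ((0:ℤ),(0:ℤ)) := by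
        rw [glueEdge, h0]; rfl
      have hfS : f (S ((0:ℤ),(0:ℤ))) = false := by
        rw [hSE0, ← hgE]; exact hglue0
      have hxW : x = W ((0:ℤ),(0:ℤ)) := by
        rcases hx with rfl | rfl
        · rfl
        · rw [hfx] at hfS; exact absurd hfS (by simp)
      by_cases hW : W ((0:ℤ),(0:ℤ)) ∈ M
      · left; rw [hxW]; exact hW
      right
      have hd' : ∀ i, i + 1 < n → d i = if i % 2 = 0 then Dir.east else Dir.north := by
        have h := alt_lemma hzz h0
        intro i hi
        rw [h i hi]
        rcases Nat.decEq (i % 2) 0 with h' | h' <;> simp_all [swD]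
      have hz := LR d n h2 hd' M hM hW
      have hdn2 := hd' (n-2) (by omega)
      rcases Nat.even_or_odd n with he | ho
      · obtain ⟨t, ht⟩ := he
        have hdd : d (n-2) = Dir.east := by rw [hdn2, if_pos (by omega)]
        have hWlast : f (W (tilePos d (n-1))) = false := by
          have hgl : glueEdge d (n-2) = W (tilePos d (n-1)) := by
            rw [glueEdge, hdd, hstep, tilePos, hdd]
            rcases tilePos d (n-2) with ⟨a, b⟩
            simp [E, W, stepDir, Prod.mk_add_mk]
          rw [← hgl]; exact hglueN
        have hyE : y = E (tilePos d (n-1)) := by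
          rcases hy with rfl | rfl
          · rw [hNWl, hWlast] at hfy; exact absurd hfy (by simp)
          · rfl
        rw [hyE]
        rw [if_pos (by omega)] at hz
        exact hz
      · obtain ⟨t, ht⟩ := ho
        have hdd : d (n-2) = Dir.north := by rw [hdn2, if_neg (by omega)]
        have hSlast : f (S (tilePos d (n-1))) = false := by
          have hgl : glueEdge d (n-2) = S (tilePos d (n-1)) := by
            rw [glueEdge, hdd, hstep, tilePos, hdd]
            rcases tilePos d (n-2) with ⟨a, b⟩
            simp [S, N, stepDir, Prod.mk_add_mk]
          rw [← hgl]; exact hglueN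
        have hyN : y = N (tilePos d (n-1)) := by
          rcases hy with rfl | rfl
          · rfl
          · rw [← hSEl, hSlast] at hfy; exact absurd hfy (by simp)
        rw [hyN]
        rw [if_neg (by omega)] at hz
        exact hz
    | north =>
      have hgN : glueEdge d 0 = N ((0:ℤ),(0:ℤ)) := by
        rw [glueEdge, h0]; rfl
      have hfW : f (W ((0:ℤ),(0:ℤ))) = false := by
        rw [← hNW0, ← hgN]; exact hglue0
      have hxS : x = S ((0:ℤ),(0:ℤ)) := by
        rcases hx with rfl | rfl
        · rw [hfx] at hfW; exact absurd hfW (by simp)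
        · rfl
      by_cases hS : S ((0:ℤ),(0:ℤ)) ∈ M
      · left; rw [hxS]; exact hS
      right
      have hd' : ∀ i, i + 1 < n →
          (fun j => swD (d j)) i = if i % 2 = 0 then Dir.east else Dir.north := by
        have h := alt_lemma hzz h0
        intro i hi
        simp only
        rw [h i hi]
        rcases Nat.decEq (i % 2) 0 with h' | h' <;> simp_all [swD]
      have hM' := isPM_sw hM
      have hW' : W ((0:ℤ),(0:ℤ)) ∉ M.image sw := by
        intro hmem
        have : W ((0:ℤ),(0:ℤ)) = sw (S ((0:ℤ),(0:ℤ))) := by simp [W, S, sw, swV]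
        rw [this, sw_mem_image] at hmem
        exact hS hmem
      have hz := LR _ n h2 hd' _ hM' hW'
      have hps : tilePos (fun j => swD (d j)) (n-1) = swV (tilePos d (n-1)) :=
        tilePos_sw d (n-1)
      have hdn2' : d (n-2) = if (n-2) % 2 = 0 then Dir.north else Dir.east := by
        have h := alt_lemma hzz h0 (n-2) (by omega)
        rcases Nat.decEq ((n-2) % 2) 0 with h' | h' <;> simp_all [swD]
      rcases Nat.even_or_odd n with he | ho
      · obtain ⟨t, ht⟩ := he
        have hdd : d (n-2) = Dir.north := by rw [hdn2', if_pos (by omega)]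
        have hSlast : f (S (tilePos d (n-1))) = false := by
          have hgl : glueEdge d (n-2) = S (tilePos d (n-1)) := by
            rw [glueEdge, hdd, hstep, tilePos, hdd]
            rcases tilePos d (n-2) with ⟨a, b⟩
            simp [S, N, stepDir, Prod.mk_add_mk]
          rw [← hgl]; exact hglueN
        have hyN : y = N (tilePos d (n-1)) := by
          rcases hy with rfl | rfl
          · rfl
          · rw [← hSEl, hSlast] at hfy; exact absurd hfy (by simp)
        rw [if_pos (by omega), hps, E_swV, sw_mem_image] at hz
        rw [hyN]; exact hz
      · obtain ⟨t, ht⟩ := ho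
        have hdd : d (n-2) = Dir.east := by rw [hdn2', if_neg (by omega)]
        have hWlast : f (W (tilePos d (n-1))) = false := by
          have hgl : glueEdge d (n-2) = W (tilePos d (n-1)) := by
            rw [glueEdge, hdd, hstep, tilePos, hdd]
            rcases tilePos d (n-2) with ⟨a, b⟩
            simp [E, W, stepDir, Prod.mk_add_mk]
          rw [← hgl]; exact hglueN
        have hyE : y = E (tilePos d (n-1)) := by
          rcases hy with rfl | rfl
          · rw [hNWl, hWlast] at hfy; exact absurd hfy (by simp)
          · rfl
        rw [if_neg (by omega), hps, N_swV, sw_mem_image] at hz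
        rw [hyE]; exact hz
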